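/- Every graph in the family 𝓕 is 2-γ'MB-critical; that is, for all integers m₁, m₂ ∈ {0} ∪ {2, 3, …} with m₁ ≤ m₂ and m₂ ≥ 2 and all t ≥ 1 (with t ≥ 2 when m₁ = 0), the graph F_{m₁,t,m₂} is 2-γ'MB-critical. -/

import Mathlib

/-- `D` is a dominating set of `G`: every vertex not in `D` has a neighbor in `D`. -/
def Dominating {V : Type*} (G : SimpleGraph V) (D : Set V) : Prop :=
  ∀ v, v ∉ D → ∃ d ∈ D, G.Adj d v

/-- Dominator wins the S-game on `G` within one move. -/
def WinsWithin1 {V : Type*} (G : SimpleGraph V) : Prop :=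
  ∀ s₁ : V, ∃ d₁, d₁ ≠ s₁ ∧ Dominating G {d₁}

/-- Dominator wins the S-game on `G` within two moves. -/
def WinsWithin2 {V : Type*} (G : SimpleGraph V) : Prop :=
  ∀ s₁ : V, ∃ d₁, d₁ ≠ s₁ ∧
    (Dominating G {d₁} ∨
      ∀ s₂, s₂ ∉ ({s₁, d₁} : Set V) →
        ∃ d₂, d₂ ∉ ({s₁, d₁, s₂} : Set V) ∧ Dominating G {d₁, d₂})

/-- `γ'MB(G) = 2`: Dominator wins the S-game within two moves but not within one. -/
def MBPrimeEqTwo {V : Type*} (G : SimpleGraph V) : Prop :=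
  WinsWithin2 G ∧ ¬ WinsWithin1 G

/-- `G` is `2`-`γ'MB`-critical: `γ'MB(G) = 2` and for every edge `e`, Dominator does not
win the S-game on `G - e` within two moves. -/
def Critical2 {V : Type*} (G : SimpleGraph V) : Prop :=
  MBPrimeEqTwo G ∧ ∀ u v : V, G.Adj u v → ¬ WinsWithin2 (G.deleteEdges {s(u, v)})

/-- The graph `H_m`, the join of `K₂` with the complement of `K_{m-2}`: the first two
vertices are adjacent to everything, the remaining vertices form an independent set.
(`H₀` is the null graph, `H₂ = K₂`.) -/
def HGraph (m : ℕ) : SimpleGraph (Fin m) :=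
  SimpleGraph.fromRel (fun u _ => u.val < 2)

/-- Vertex type of `F_{m₁,t,m₂}`: a copy of `H_{m₁}`, a copy of `H_{m₂}`, the independent
set `B` of `t` vertices, and the two vertices `v₁ = inr (inr 0)` and `v₂ = inr (inr 1)`. -/
abbrev FVert (m₁ t m₂ : ℕ) : Type := (Fin m₁ ⊕ Fin m₂) ⊕ (Fin t ⊕ Fin 2)

/-- The graph `F_{m₁,t,m₂}`: disjoint copies of `H_{m₁}` and `H_{m₂}`, an independent set
`B` of `t` vertices, and nonadjacent vertices `v₁, v₂`, where `v₁` is joined to `H_{m₁}`,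
`v₂` is joined to `H_{m₂}`, and both `v₁` and `v₂` are joined to all of `B`. -/
def FGraph (m₁ t m₂ : ℕ) : SimpleGraph (FVert m₁ t m₂) :=
  SimpleGraph.fromRel (fun u v =>
    match u, v with
    | .inl (.inl a), .inl (.inl _) => a.val < 2   -- inside H_{m₁}
    | .inl (.inr a), .inl (.inr _) => a.val < 2   -- inside H_{m₂}
    | .inr (.inr i), .inl (.inl _) => i = 0       -- v₁ to H_{m₁}
    | .inr (.inr i), .inl (.inr _) => i = 1       -- v₂ to H_{m₂}
    | .inr (.inr _), .inr (.inl _) => True        -- v₁, v₂ to B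
    | _, _ => False)

/-!
No single vertex dominates `F = F_{m₁,t,m₂}`: neither hub dominates the other, and a vertex
adjacent to both hubs lies in `B` and misses `H_{m₂}`. Dominator nevertheless wins in two
moves, because after her first move she always has three ways to complete a dominating pair
and Staller can block only two of them: `v₁` is completed by `v₂` or a universal vertex of
`H_{m₂}`, and `v₂` by `v₁` or a universal vertex of `H_{m₁}` (by a vertex of `B` when
`m₁ = 0`).

For criticality, note that no dominating pair of `F` avoids both hubs. After deleting an edge
`e`, Staller takes the hub `v_j` and forces Dominator to take the other hub `v_i`. Then at most
one vertex `x` still makes `{v_i, x}` dominate `F - e`, and Staller takes it: the other end of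
`e` if `e` is incident to `v_i`, and otherwise (`e` inside the copy of `H_m` attached to `v_j`)
`x` must be a dominating vertex of `H_m - e`, of which there is at most one.
-/

open SimpleGraph

section Domination

variable {V : Type*} {G G' : SimpleGraph V}

theorem dominating_singleton_iff {d : V} : Dominating G {d} ↔ ∀ v, d = v ∨ G.Adj d v := by
  simp only [Dominating, Set.mem_singleton_iff, exists_eq_left]
  exact forall_congr' fun v => by tauto

theorem dominating_pair_iff {d₁ d₂ : V} :
    Dominating G {d₁, d₂} ↔ ∀ v, (d₁ = v ∨ G.Adj d₁ v) ∨ (d₂ = v ∨ G.Adj d₂ v) := by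
  simp only [Dominating, Set.mem_insert_iff, Set.mem_singleton_iff, exists_eq_or_imp,
    exists_eq_left]
  exact forall_congr' fun v => by tauto

theorem Dominating.mono {D : Set V} (hle : G' ≤ G) (hD : Dominating G' D) : Dominating G D :=
  fun v hv => (hD v hv).imp fun _ ⟨hd, hadj⟩ => ⟨hd, hle hadj⟩

def WinsSecondRound (G : SimpleGraph V) (s₁ d₁ : V) : Prop :=
  ∀ s₂, s₂ ∉ ({s₁, d₁} : Set V) → ∃ d₂, d₂ ∉ ({s₁, d₁, s₂} : Set V) ∧ Dominating G {d₁, d₂}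

theorem winsWithin2_iff :
    WinsWithin2 G ↔ ∀ s₁, ∃ d₁, d₁ ≠ s₁ ∧ (Dominating G {d₁} ∨ WinsSecondRound G s₁ d₁) :=
  Iff.rfl

theorem winsSecondRound_of_three {s₁ d c₁ c₂ c₃ : V} (h₁₂ : c₁ ≠ c₂) (h₁₃ : c₁ ≠ c₃)
    (h₂₃ : c₂ ≠ c₃) (hc : ∀ c ∈ ({c₁, c₂, c₃} : Set V), c ≠ d ∧ Dominating G {d, c}) :
    WinsSecondRound G s₁ d := by
  intro s₂ _
  obtain ⟨c, hc₀, hcs₁, hcs₂⟩ : ∃ c ∈ ({c₁, c₂, c₃} : Set V), c ≠ s₁ ∧ c ≠ s₂ := by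
    by_contra! h
    simp only [Set.mem_insert_iff, Set.mem_singleton_iff, forall_eq_or_imp, forall_eq] at h
    obtain ⟨e₁, e₂, e₃⟩ := h
    rcases eq_or_ne c₁ s₁ with rfl | h₁
    · exact h₂₃ ((e₂ h₁₂.symm).trans (e₃ h₁₃.symm).symm)
    rcases eq_or_ne c₂ s₁ with rfl | h₂
    · exact h₁₃ ((e₁ h₁).trans (e₃ h₂₃.symm).symm)
    · exact h₁₂ ((e₁ h₁).trans (e₂ h₂).symm)
  refine ⟨c, ?_, (hc c hc₀).2⟩
  simp only [Set.mem_insert_iff, Set.mem_singleton_iff, not_or]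
  exact ⟨hcs₁, (hc c hc₀).1, hcs₂⟩

/-- Staller plays `u`; if Dominator does not answer with `w`, Staller takes `w`, and otherwise
Staller takes `s`. -/
theorem not_winsWithin2_of_forced {u w s : V} (hle : G' ≤ G) (huw : u ≠ w) (hsu : s ≠ u)
    (hsw : s ≠ w) (h₁ : ∀ d, ¬ Dominating G {d})
    (h₂ : ∀ d₁ d₂, d₁ ∉ ({u, w} : Set V) → d₂ ∉ ({u, w} : Set V) → ¬ Dominating G {d₁, d₂})
    (h₃ : ∀ x, x ∉ ({u, w, s} : Set V) → ¬ Dominating G' {w, x}) :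
    ¬ WinsWithin2 G' := by
  intro hwin
  obtain ⟨d, hdu, hd⟩ := hwin u
  rcases hd with hd | hd
  · exact h₁ d (hd.mono hle)
  by_cases hdw : d = w
  · subst hdw
    obtain ⟨x, hx, hD⟩ := hd s (by simp [hsu, hsw])
    exact h₃ x hx hD
  · obtain ⟨x, hx, hD⟩ := hd w (by simp [huw.symm, Ne.symm hdw])
    refine h₂ d x (by simp [hdu, hdw]) ?_ (hD.mono hle)
    simp only [Set.mem_insert_iff, Set.mem_singleton_iff, not_or] at hx ⊢
    exact ⟨hx.1, hx.2.2⟩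

theorem ne_of_dominating_singleton_deleteEdges {a c z : V} (hac : a ≠ c)
    (hz : Dominating (G.deleteEdges {s(a, c)}) {z}) : z ≠ a ∧ z ≠ c := by
  rw [dominating_singleton_iff] at hz
  constructor
  · rintro rfl
    rcases hz c with h | h
    · exact hac h
    · simp at h
  · rintro rfl
    rcases hz a with h | h
    · exact hac h.symm
    · simp [Sym2.eq_swap] at h

theorem adj_of_dominating_pair_deleteEdges {u w x y : V} (huw : u ≠ w) (hwu : ¬ G.Adj w u)
    (hwy : w ≠ y) (hxu : x ≠ u) (hD : Dominating (G.deleteEdges {s(w, y)}) {w, x}) :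
    G.Adj x u ∧ (x = y ∨ G.Adj x y) := by
  rw [dominating_pair_iff] at hD
  constructor
  · rcases hD u with (h | h) | (h | h)
    · exact absurd h.symm huw
    · exact absurd (deleteEdges_le _ h) hwu
    · exact absurd h hxu
    · exact deleteEdges_le _ h
  · rcases hD y with (h | h) | (h | h)
    · exact absurd h hwy
    · simp at h
    · exact .inl h
    · exact .inr (deleteEdges_le _ h)

theorem exists_dominating_of_dominating_pair_deleteEdges {W : Type*} {H : SimpleGraph W}
    (f : H ↪g G) {u w x : V} (hnbr : ∀ {y b}, G.Adj y (f b) → y = u ∨ y ∈ Set.range f)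
    (hwu : w ≠ u) (hw : w ∉ Set.range f) (hxu : x ≠ u) {a c : W}
    (hD : Dominating (G.deleteEdges {s(f a, f c)}) {w, x}) :
    ∃ z, f z = x ∧ Dominating (H.deleteEdges {s(a, c)}) {z} := by
  rw [dominating_pair_iff] at hD
  have hw_nadj : ∀ b, ¬ G.Adj w (f b) := fun _ h => (hnbr h).elim hwu hw
  obtain ⟨z, rfl⟩ : x ∈ Set.range f := by
    rcases hD (f a) with (h | h) | (h | h)
    · exact absurd ⟨a, h.symm⟩ hw
    · exact absurd (deleteEdges_le _ h) (hw_nadj a)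
    · exact ⟨a, h.symm⟩
    · exact (hnbr (deleteEdges_le _ h)).resolve_left hxu
  refine ⟨z, rfl, dominating_singleton_iff.2 fun b => ?_⟩
  rcases hD (f b) with (h | h) | (h | h)
  · exact absurd ⟨b, h.symm⟩ hw
  · exact absurd (deleteEdges_le _ h) (hw_nadj b)
  · exact .inl (f.injective h)
  · rw [deleteEdges_adj, Set.mem_singleton_iff] at h
    refine .inr ((deleteEdges_adj ..).2 ⟨f.map_adj_iff.1 h.1, fun he => h.2 ?_⟩)
    simpa using congrArg (Sym2.map f) (Set.mem_singleton_iff.1 he)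

end Domination

theorem HGraph.adj_iff {m : ℕ} {u v : Fin m} :
    (HGraph m).Adj u v ↔ u ≠ v ∧ (u.val < 2 ∨ v.val < 2) := by
  simp [HGraph]

/-- Two dominating vertices of `H_m - ac` would form a `K₄` with `a` and `c`, but a clique of
`H_m` contains at most one vertex besides the two universal ones. -/
theorem HGraph.subsingleton_dominating_deleteEdges {m : ℕ} {a c : Fin m}
    (hac : (HGraph m).Adj a c) :
    {z | Dominating ((HGraph m).deleteEdges {s(a, c)}) {z}}.Subsingleton := by
  intro z hz z' hz'
  by_contra hzz'
  have hadj : ∀ {z v}, Dominating ((HGraph m).deleteEdges {s(a, c)}) {z} → z ≠ v →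
      (HGraph m).Adj z v := fun hz hv =>
    deleteEdges_le _ ((dominating_singleton_iff.1 hz _).resolve_left hv)
  obtain ⟨hza, hzc⟩ := ne_of_dominating_singleton_deleteEdges hac.ne hz
  obtain ⟨hz'a, hz'c⟩ := ne_of_dominating_singleton_deleteEdges hac.ne hz'
  have := hadj hz hza
  have := hadj hz hzc
  have := hadj hz hzz'
  have := hadj hz' hz'a
  have := hadj hz' hz'c
  simp only [HGraph.adj_iff, ne_eq, Fin.ext_iff] at *
  omega

namespace FGraph

variable {m₁ t m₂ : ℕ}

/-- The vertices `v₁ = hub 0` and `v₂ = hub 1`. -/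
abbrev hub (i : Fin 2) : FVert m₁ t m₂ := .inr (.inr i)

abbrev h₁ (a : Fin m₁) : FVert m₁ t m₂ := .inl (.inl a)

abbrev h₂ (a : Fin m₂) : FVert m₁ t m₂ := .inl (.inr a)

abbrev b (j : Fin t) : FVert m₁ t m₂ := .inr (.inl j)

def embH₁ : HGraph m₁ ↪g FGraph m₁ t m₂ where
  toFun := h₁
  inj' _ _ h := by simpa using h
  map_rel_iff' {a c} := by
    change (FGraph m₁ t m₂).Adj (h₁ a) (h₁ c) ↔ _
    simp [FGraph, HGraph]

def embH₂ : HGraph m₂ ↪g FGraph m₁ t m₂ where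
  toFun := h₂
  inj' _ _ h := by simpa using h
  map_rel_iff' {a c} := by
    change (FGraph m₁ t m₂).Adj (h₂ a) (h₂ c) ↔ _
    simp [FGraph, HGraph]

@[simp] theorem embH₁_apply (a : Fin m₁) : (embH₁ a : FVert m₁ t m₂) = h₁ a := rfl

@[simp] theorem embH₂_apply (a : Fin m₂) : (embH₂ a : FVert m₁ t m₂) = h₂ a := rfl

theorem hub_not_adj (i j : Fin 2) : ¬ (FGraph m₁ t m₂).Adj (hub i) (hub j) := by
  simp [FGraph]

theorem hub_notMem_range_embH₁ (i : Fin 2) : (hub i : FVert m₁ t m₂) ∉ Set.range embH₁ := by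
  simp

theorem eq_hub_or_mem_range_of_adj_embH₁ {y : FVert m₁ t m₂} {a : Fin m₁}
    (h : (FGraph m₁ t m₂).Adj y (embH₁ a)) : y = hub 0 ∨ y ∈ Set.range embH₁ := by
  rw [embH₁_apply] at h
  rcases y with (c | c) | (j | i)
  · simp
  · simp [FGraph] at h
  · simp [FGraph] at h
  · fin_cases i <;> simp_all [FGraph]

theorem hub_notMem_range_embH₂ (i : Fin 2) : (hub i : FVert m₁ t m₂) ∉ Set.range embH₂ := by
  simp

theorem eq_hub_or_mem_range_of_adj_embH₂ {y : FVert m₁ t m₂} {a : Fin m₂}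
    (h : (FGraph m₁ t m₂).Adj y (embH₂ a)) : y = hub 1 ∨ y ∈ Set.range embH₂ := by
  rw [embH₂_apply] at h
  rcases y with (c | c) | (j | i)
  · simp [FGraph] at h
  · simp
  · simp [FGraph] at h
  · fin_cases i <;> simp_all [FGraph]

theorem hub_adj_cases {i : Fin 2} {y : FVert m₁ t m₂} (h : (FGraph m₁ t m₂).Adj (hub i) y) :
    (i = 0 ∧ ∃ a, y = h₁ a) ∨ (i = 1 ∧ ∃ a, y = h₂ a) ∨ ∃ j, y = b j := by
  rcases y with (a | a) | (j | k)
  · fin_cases i <;> simp_all [FGraph, h₁]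
  · fin_cases i <;> simp_all [FGraph, h₂]
  · simp
  · simp [FGraph] at h

theorem eq_of_adj_hub {i j : Fin 2} (hij : i ≠ j) {x y : FVert m₁ t m₂}
    (hy : (FGraph m₁ t m₂).Adj (hub i) y) (hx : (FGraph m₁ t m₂).Adj x (hub j))
    (hxy : x = y ∨ (FGraph m₁ t m₂).Adj x y) : x = y := by
  refine hxy.resolve_right fun h => ?_
  rcases hub_adj_cases hy with ⟨rfl, c, rfl⟩ | ⟨rfl, c, rfl⟩ | ⟨l, rfl⟩ <;>
    rcases hub_adj_cases hx.symm with ⟨rfl, a, rfl⟩ | ⟨rfl, a, rfl⟩ | ⟨k, rfl⟩ <;>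
    simp_all [FGraph]

theorem eq_h₁_or_h₂_or_b {x : FVert m₁ t m₂} (hx : ∀ i, x ≠ hub i) :
    (∃ a, x = h₁ a) ∨ (∃ a, x = h₂ a) ∨ ∃ j, x = b j := by
  rcases x with (a | a) | (j | i)
  · exact .inl ⟨a, rfl⟩
  · exact .inr (.inl ⟨a, rfl⟩)
  · exact .inr (.inr ⟨j, rfl⟩)
  · exact absurd rfl (hx i)

theorem not_dominating_singleton (hm₂ : 0 < m₂) (d : FVert m₁ t m₂) :
    ¬ Dominating (FGraph m₁ t m₂) {d} := by
  rw [dominating_singleton_iff]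
  intro hD
  have hv₁ := hD (hub 0)
  have hv₂ := hD (hub 1)
  have hH₂ := hD (h₂ ⟨0, hm₂⟩)
  rcases d with (a | a) | (j | i)
  · simp [FGraph] at hv₂
  · simp [FGraph] at hv₁
  · simp [FGraph] at hH₂
  · fin_cases i
    · simp [FGraph] at hv₂
    · simp [FGraph] at hv₁

theorem not_dominating_pair (ht : 0 < t) (hm₂ : 0 < m₂) (h : 0 < m₁ ∨ 2 ≤ t)
    {d₁ d₂ : FVert m₁ t m₂} (hd₁ : ∀ i, d₁ ≠ hub i) (hd₂ : ∀ i, d₂ ≠ hub i) :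
    ¬ Dominating (FGraph m₁ t m₂) {d₁, d₂} := by
  rw [dominating_pair_iff]
  intro hD
  have hB := hD (b ⟨0, ht⟩)
  have hH := hD (h₂ ⟨0, hm₂⟩)
  -- `b 0` forces a vertex of `B` into the pair and `h₂ 0` one of `H₂`; then `hv` fails.
  rcases h with h | h
  · have hv := hD (h₁ ⟨0, h⟩)
    rcases eq_h₁_or_h₂_or_b hd₁ with ⟨a, rfl⟩ | ⟨a, rfl⟩ | ⟨j, rfl⟩ <;>
      rcases eq_h₁_or_h₂_or_b hd₂ with ⟨c, rfl⟩ | ⟨c, rfl⟩ | ⟨k, rfl⟩ <;>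
      simp [FGraph] at hB hH hv
  · have hv := hD (b ⟨1, h⟩)
    rcases eq_h₁_or_h₂_or_b hd₁ with ⟨a, rfl⟩ | ⟨a, rfl⟩ | ⟨j, rfl⟩ <;>
      rcases eq_h₁_or_h₂_or_b hd₂ with ⟨c, rfl⟩ | ⟨c, rfl⟩ | ⟨k, rfl⟩ <;>
      simp [FGraph] at hB hH hv <;> simp [hB] at hv

theorem dominating_hub_hub : Dominating (FGraph m₁ t m₂) {hub 0, hub 1} := by
  rw [dominating_pair_iff]
  intro v
  rcases v with (a | a) | (j | i)
  · simp [FGraph]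
  · simp [FGraph]
  · simp [FGraph]
  · fin_cases i <;> simp

theorem dominating_hub_h₂ {k : Fin m₂} (hk : k.val < 2) :
    Dominating (FGraph m₁ t m₂) {hub 0, h₂ k} := by
  rw [dominating_pair_iff]
  intro v
  rcases v with (a | a) | (j | i)
  · simp [FGraph]
  · by_cases hka : k = a
    · simp [hka]
    · simp [FGraph, hka]
      omega
  · simp [FGraph]
  · fin_cases i <;> simp [FGraph]

theorem dominating_hub_h₁ {k : Fin m₁} (hk : k.val < 2) :
    Dominating (FGraph m₁ t m₂) {hub 1, h₁ k} := by
  rw [dominating_pair_iff]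
  intro v
  rcases v with (a | a) | (j | i)
  · by_cases hka : k = a
    · simp [hka]
    · simp [FGraph, hka]
      omega
  · simp [FGraph]
  · simp [FGraph]
  · fin_cases i <;> simp [FGraph]

theorem dominating_hub_b (hm₁ : m₁ = 0) (j : Fin t) :
    Dominating (FGraph m₁ t m₂) {hub 1, b j} := by
  rw [dominating_pair_iff]
  intro v
  rcases v with (a | a) | (k | i)
  · exact absurd a.isLt (by omega)
  · simp [FGraph]
  · simp [FGraph]
  · fin_cases i <;> simp [FGraph]

theorem winsWithin2 (hm₁ : m₁ = 0 ∨ 2 ≤ m₁) (hm₂ : 2 ≤ m₂) (ht₀ : m₁ = 0 → 2 ≤ t) :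
    WinsWithin2 (FGraph m₁ t m₂) := by
  rw [winsWithin2_iff]
  intro s₁
  by_cases hs₁ : s₁ = hub 1
  · refine ⟨hub 0, by simp [hs₁], .inr (winsSecondRound_of_three (c₁ := hub 1)
      (c₂ := h₂ ⟨0, by omega⟩) (c₃ := h₂ ⟨1, by omega⟩) (by simp) (by simp) (by simp) ?_)⟩
    simp only [Set.mem_insert_iff, Set.mem_singleton_iff, forall_eq_or_imp, forall_eq]
    exact ⟨⟨by simp, dominating_hub_hub⟩, ⟨by simp, dominating_hub_h₂ (by simp)⟩,
      ⟨by simp, dominating_hub_h₂ (by simp)⟩⟩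
  obtain ⟨c₂, c₃, h₂₃, hc₂, hc₃, hD₂, hD₃⟩ : ∃ c₂ c₃ : FVert m₁ t m₂, c₂ ≠ c₃ ∧
      (∀ i, c₂ ≠ hub i) ∧ (∀ i, c₃ ≠ hub i) ∧
      Dominating (FGraph m₁ t m₂) {hub 1, c₂} ∧ Dominating (FGraph m₁ t m₂) {hub 1, c₃} := by
    rcases hm₁ with hm₁ | hm₁
    · have ht := ht₀ hm₁
      exact ⟨b ⟨0, by omega⟩, b ⟨1, by omega⟩, by simp, by simp, by simp,
        dominating_hub_b hm₁ _, dominating_hub_b hm₁ _⟩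
    · exact ⟨h₁ ⟨0, by omega⟩, h₁ ⟨1, by omega⟩, by simp, by simp, by simp,
        dominating_hub_h₁ (by simp), dominating_hub_h₁ (by simp)⟩
  refine ⟨hub 1, Ne.symm hs₁, .inr (winsSecondRound_of_three (c₁ := hub 0)
    ((hc₂ 0).symm) ((hc₃ 0).symm) h₂₃ ?_)⟩
  simp only [Set.mem_insert_iff, Set.mem_singleton_iff, forall_eq_or_imp, forall_eq]
  exact ⟨⟨by simp, Set.pair_comm (hub 0) (hub 1) ▸ dominating_hub_hub⟩, ⟨hc₂ 1, hD₂⟩,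
    ⟨hc₃ 1, hD₃⟩⟩

theorem not_winsWithin1 (hm₂ : 0 < m₂) : ¬ WinsWithin1 (FGraph m₁ t m₂) := fun h =>
  let ⟨d, _, hd⟩ := h (hub 0)
  not_dominating_singleton hm₂ d hd

theorem not_winsWithin2_of_hub_forced (ht : 0 < t) (hm₂ : 0 < m₂) (hB : 0 < m₁ ∨ 2 ≤ t)
    {G' : SimpleGraph (FVert m₁ t m₂)} (hle : G' ≤ FGraph m₁ t m₂) {i j : Fin 2} (hij : i ≠ j)
    {s : FVert m₁ t m₂} (hs : ∀ k, s ≠ hub k)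
    (h₃ : ∀ x, x ∉ ({hub j, hub i, s} : Set (FVert m₁ t m₂)) → ¬ Dominating G' {hub i, x}) :
    ¬ WinsWithin2 G' := by
  have hhub : ∀ {x : FVert m₁ t m₂}, x ∉ ({hub j, hub i} : Set _) → ∀ k, x ≠ hub k := by
    intro x hx k hk
    subst hk
    simp only [Set.mem_insert_iff, Set.mem_singleton_iff, Sum.inr.injEq, not_or] at hx
    omega
  exact not_winsWithin2_of_forced hle (by simpa using hij.symm) (hs j) (hs i)
    (not_dominating_singleton hm₂)
    (fun d₁ d₂ hd₁ hd₂ => not_dominating_pair ht hm₂ hB (hhub hd₁) (hhub hd₂)) h₃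

theorem not_winsWithin2_deleteEdges_hub (ht : 0 < t) (hm₂ : 0 < m₂) (hB : 0 < m₁ ∨ 2 ≤ t)
    {i : Fin 2} {y : FVert m₁ t m₂} (hy : (FGraph m₁ t m₂).Adj (hub i) y) :
    ¬ WinsWithin2 ((FGraph m₁ t m₂).deleteEdges {s(hub i, y)}) := by
  obtain ⟨j, hij⟩ : ∃ j, i ≠ j := ⟨i + 1, by fin_cases i <;> decide⟩
  have hy_hub : ∀ k, y ≠ hub k := fun k h => hub_not_adj i k (h ▸ hy)
  refine not_winsWithin2_of_hub_forced ht hm₂ hB (deleteEdges_le _) hij hy_hub fun x hx hD => ?_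
  simp only [Set.mem_insert_iff, Set.mem_singleton_iff, not_or] at hx
  obtain ⟨hxj, hxy⟩ := adj_of_dominating_pair_deleteEdges (by simpa using hij.symm)
    (hub_not_adj i j) hy.ne hx.1 hD
  exact hx.2.2 (eq_of_adj_hub hij hy hxj hxy)

theorem not_winsWithin2_deleteEdges_embedding (ht : 0 < t) (hm₂ : 0 < m₂)
    (hB : 0 < m₁ ∨ 2 ≤ t) {n : ℕ} (f : HGraph n ↪g FGraph m₁ t m₂) {i j : Fin 2} (hij : i ≠ j)
    (hf : ∀ k, hub k ∉ Set.range f)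
    (hnbr : ∀ {y a}, (FGraph m₁ t m₂).Adj y (f a) → y = hub j ∨ y ∈ Set.range f)
    {a c : Fin n} (hac : (HGraph n).Adj a c) :
    ¬ WinsWithin2 ((FGraph m₁ t m₂).deleteEdges {s(f a, f c)}) := by
  obtain ⟨z₀, hz₀⟩ : ∃ z₀, ∀ z, Dominating ((HGraph n).deleteEdges {s(a, c)}) {z} → z = z₀ := by
    by_cases h : ∃ z₀, Dominating ((HGraph n).deleteEdges {s(a, c)}) {z₀}
    · obtain ⟨z₀, h₀⟩ := h
      exact ⟨z₀, fun z hz => HGraph.subsingleton_dominating_deleteEdges hac hz h₀⟩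
    · exact ⟨a, fun z hz => (h ⟨z, hz⟩).elim⟩
  refine not_winsWithin2_of_hub_forced ht hm₂ hB (deleteEdges_le _) hij (s := f z₀)
    (fun k h => hf k ⟨z₀, h⟩) fun x hx hD => ?_
  simp only [Set.mem_insert_iff, Set.mem_singleton_iff, not_or] at hx
  obtain ⟨z, rfl, hz⟩ := exists_dominating_of_dominating_pair_deleteEdges f hnbr
    (by simpa using hij) (hf i) hx.1 hD
  exact hx.2.2 (congrArg f (hz₀ z hz))

theorem adj_cases {p q : FVert m₁ t m₂} (h : (FGraph m₁ t m₂).Adj p q) :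
    (∃ i y, (FGraph m₁ t m₂).Adj (hub i) y ∧ s(p, q) = s(hub i, y)) ∨
    (∃ a c, (HGraph m₁).Adj a c ∧ s(p, q) = s(embH₁ a, embH₁ c)) ∨
    (∃ a c, (HGraph m₂).Adj a c ∧ s(p, q) = s(embH₂ a, embH₂ c)) := by
  rcases p with (a | a) | (j | i)
  · rcases q with (c | c) | (k | i)
    · exact .inr (.inl ⟨a, c, embH₁.map_adj_iff.1 h, rfl⟩)
    · simp [FGraph] at h
    · simp [FGraph] at h
    · exact .inl ⟨i, _, h.symm, Sym2.eq_swap⟩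
  · rcases q with (c | c) | (k | i)
    · simp [FGraph] at h
    · exact .inr (.inr ⟨a, c, embH₂.map_adj_iff.1 h, rfl⟩)
    · simp [FGraph] at h
    · exact .inl ⟨i, _, h.symm, Sym2.eq_swap⟩
  · rcases q with (c | c) | (k | i)
    · simp [FGraph] at h
    · simp [FGraph] at h
    · simp [FGraph] at h
    · exact .inl ⟨i, _, h.symm, Sym2.eq_swap⟩
  · exact .inl ⟨i, _, h, rfl⟩

end FGraph

theorem stmt3_general (m₁ t m₂ : ℕ) (hm₁ : m₁ = 0 ∨ 2 ≤ m₁)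
    (hm₂ : 2 ≤ m₂) (ht : 1 ≤ t) (ht₀ : m₁ = 0 → 2 ≤ t) :
    Critical2 (FGraph m₁ t m₂) := by
  have hm₂' : 0 < m₂ := by omega
  have hB : 0 < m₁ ∨ 2 ≤ t := by omega
  refine ⟨⟨FGraph.winsWithin2 hm₁ hm₂ ht₀, FGraph.not_winsWithin1 hm₂'⟩, fun p q hpq => ?_⟩
  rcases FGraph.adj_cases hpq with ⟨i, y, hy, he⟩ | ⟨a, c, hac, he⟩ | ⟨a, c, hac, he⟩ <;> rw [he]
  · exact FGraph.not_winsWithin2_deleteEdges_hub ht hm₂' hB hy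
  · exact FGraph.not_winsWithin2_deleteEdges_embedding ht hm₂' hB FGraph.embH₁
      (i := 1) (j := 0) (by decide) FGraph.hub_notMem_range_embH₁
      FGraph.eq_hub_or_mem_range_of_adj_embH₁ hac
  · exact FGraph.not_winsWithin2_deleteEdges_embedding ht hm₂' hB FGraph.embH₂
      (i := 0) (j := 1) (by decide) FGraph.hub_notMem_range_embH₂
      FGraph.eq_hub_or_mem_range_of_adj_embH₂ hac

theorem stmt3 (m₁ t m₂ : ℕ) (hm₁ : m₁ = 0 ∨ 2 ≤ m₁) (h₁₂ : m₁ ≤ m₂)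
    (hm₂ : 2 ≤ m₂) (ht : 1 ≤ t) (ht₀ : m₁ = 0 → 2 ≤ t) :
    Critical2 (FGraph m₁ t m₂) :=
  stmt3_general m₁ t m₂ hm₁ hm₂ ht ht₀
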